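/- Suppose $f : \mathbb{R}^n \to \mathbb{R}$ has $L$-Lipschitz gradient. Let $x \in \mathrm{dom}\, r$, let $\Lambda$ be symmetric positive definite with $\Lambda \succeq \lambda_m I$, let $g \in \mathbb{R}^n$ (a stochastic gradient estimate), and set $v := \mathrm{prox}^\Lambda_r(x - \Lambda^{-1} g) - x$. Let $\gamma \in (0,1)$, $\rho \in (1,\gamma^{-1})$, and $\bar\alpha := 2(1-\gamma\rho)\lambda_m / L$. Then for all $\alpha \in [0, \min\{1,\bar\alpha\}]$, $\psi(x + \alpha v) - \psi(x) \le -\alpha\gamma\|v\|_\Lambda^2 + \frac{\alpha}{4\gamma(\rho-1)\lambda_m}\|\nabla f(x) - g\|^2$, where $\psi = f + r$. -/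

import Mathlib

/-!
Write `u = x - Λ⁻¹ g`, `p = prox^Λ_r u` and `v = p - x`. Comparing `p` with the points of the
segment `[p, x]` in the prox problem and letting them tend to `p` gives the subgradient inequality
`r p + ⟪Λ (u - p), x - p⟫ ≤ r x`, i.e. `r p - r x ≤ -⟪g, v⟫ - ‖v‖²_Λ`. Convexity of `r` on
`[x, p]` and the descent lemma for `f` then bound `ψ (x + α v) - ψ x` by
`α (⟪∇f x - g, v⟫ - ‖v‖²_Λ) + L α² ‖v‖² / 2`, and Young's inequality together with
`λ_m ‖v‖² ≤ ‖v‖²_Λ` turns this into the claimed bound.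
-/

open scoped RealInnerProductSpace
open Filter Topology

section

variable {E : Type*} [NormedAddCommGroup E] [InnerProductSpace ℝ E]

theorem LinearMap.IsSymmetric.inner_map_sub_smul_self {T : E →ₗ[ℝ] E} (hT : T.IsSymmetric)
    (a b : E) (t : ℝ) :
    ⟪a - t • b, T (a - t • b)⟫ = ⟪a, T a⟫ - 2 * t * ⟪T a, b⟫ + t ^ 2 * ⟪b, T b⟫ := by
  simp only [map_sub, map_smul, inner_sub_left, inner_sub_right, real_inner_smul_left,
    real_inner_smul_right, hT a b, real_inner_comm (T a) b]
  ring

theorem le_add_inner_add_sq_of_lipschitz_gradient [CompleteSpace E] {f : E → ℝ} {gradf : E → E}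
    (hgrad : ∀ x, HasGradientAt f (gradf x) x) {L : ℝ}
    (hlip : ∀ x y, ‖gradf x - gradf y‖ ≤ L * ‖x - y‖) (x v : E) :
    f (x + v) ≤ f x + ⟪gradf x, v⟫ + L / 2 * ‖v‖ ^ 2 := by
  set h : ℝ → ℝ := fun t => f (x + t • v) - t * ⟪gradf x, v⟫ - L / 2 * t ^ 2 * ‖v‖ ^ 2
  have hderiv (t : ℝ) :
      HasDerivAt h (⟪gradf (x + t • v) - gradf x, v⟫ - L * t * ‖v‖ ^ 2) t := by
    have hline : HasDerivAt (fun t : ℝ => x + t • v) v t := by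
      simpa using ((hasDerivAt_id t).smul_const v).const_add x
    have hf := (hasGradientAt_iff_hasFDerivAt.mp (hgrad (x + t • v))).comp_hasDerivAt t hline
    rw [InnerProductSpace.toDual_apply_apply] at hf
    refine ((hf.sub ((hasDerivAt_id t).mul_const ⟪gradf x, v⟫)).sub
      (((hasDerivAt_pow 2 t).const_mul (L / 2)).mul_const (‖v‖ ^ 2))).congr_deriv ?_
    rw [inner_sub_left]
    push_cast
    ring
  have hmono : h 1 ≤ h 0 := by
    refine antitoneOn_of_deriv_nonpos (convex_Icc 0 1)
      (fun t _ => (hderiv t).continuousAt.continuousWithinAt)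
      (fun t _ => (hderiv t).differentiableAt.differentiableWithinAt) ?_
      (by simp) (by simp) zero_le_one
    intro t ht
    rw [interior_Icc] at ht
    rw [(hderiv t).deriv, sub_nonpos]
    calc ⟪gradf (x + t • v) - gradf x, v⟫ ≤ ‖gradf (x + t • v) - gradf x‖ * ‖v‖ :=
          real_inner_le_norm _ _
      _ ≤ L * ‖t • v‖ * ‖v‖ := by
          gcongr
          simpa using hlip (x + t • v) x
      _ = L * t * ‖v‖ ^ 2 := by
          rw [norm_smul, Real.norm_of_nonneg ht.1.le]
          ring
  simp only [h, one_smul, zero_smul, add_zero] at hmono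
  linarith

theorem real_inner_le_sq_div_add_mul_sq {c : ℝ} (hc : 0 < c) (d v : E) :
    ⟪d, v⟫ ≤ ‖d‖ ^ 2 / (4 * c) + c * ‖v‖ ^ 2 := by
  refine (real_inner_le_norm d v).trans ?_
  rw [div_add' _ _ _ (by positivity), le_div_iff₀ (by positivity)]
  nlinarith [sq_nonneg (‖d‖ - 2 * c * ‖v‖)]

theorem le_coe_of_convex {r : E → EReal}
    (hconv : ∀ x y : E, ∀ t : ℝ, 0 ≤ t → t ≤ 1 →
      r (t • x + (1 - t) • y) ≤ (t : EReal) * r x + ((1 - t : ℝ) : EReal) * r y)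
    {x y : E} {a b t : ℝ} (hx : r x = a) (hy : r y = b) (h₀ : 0 ≤ t) (h₁ : t ≤ 1) :
    r (t • x + (1 - t) • y) ≤ ((t * a + (1 - t) * b : ℝ) : EReal) := by
  have h := hconv x y t h₀ h₁
  rwa [hx, hy, ← EReal.coe_mul, ← EReal.coe_mul, ← EReal.coe_add] at h

theorem nonpos_of_forall_le_mul {a c : ℝ} (h : ∀ t : ℝ, 0 < t → t ≤ 1 → a ≤ t * c) : a ≤ 0 := by
  have hlim : Tendsto (fun t : ℝ => t * c) (𝓝[>] 0) (𝓝 0) := by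
    simpa using ((continuous_mul_const c).tendsto 0).mono_left nhdsWithin_le_nhds
  refine ge_of_tendsto hlim ?_
  filter_upwards [Ioc_mem_nhdsGT one_pos] with t ht using h t ht.1 ht.2

def IsProxPoint (r : E → EReal) (T : E →ₗ[ℝ] E) (u p : E) : Prop :=
  ∀ y, r p + ((1 / 2 * ⟪u - p, T (u - p)⟫ : ℝ) : EReal)
    ≤ r y + ((1 / 2 * ⟪u - y, T (u - y)⟫ : ℝ) : EReal)

namespace IsProxPoint

variable {r : E → EReal} {T : E →ₗ[ℝ] E} {u p x : E}

theorem ne_top (hp : IsProxPoint r T u p) (hx : r x ≠ ⊤) : r p ≠ ⊤ := by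
  have h := ne_top_of_le_ne_top (EReal.add_ne_top hx (EReal.coe_ne_top _)) (hp x)
  exact (EReal.add_ne_top_iff_ne_top_left (EReal.coe_ne_bot _) (EReal.coe_ne_top _)).1 h

theorem toReal_add_inner_le (hp : IsProxPoint r T u p) (hT : T.IsSymmetric)
    (hconv : ∀ x y : E, ∀ t : ℝ, 0 ≤ t → t ≤ 1 →
      r (t • x + (1 - t) • y) ≤ (t : EReal) * r x + ((1 - t : ℝ) : EReal) * r y)
    (hbot : ∀ x, r x ≠ ⊥) (hx : r x ≠ ⊤) :
    (r p).toReal + ⟪T (u - p), x - p⟫ ≤ (r x).toReal := by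
  obtain ⟨a, ha⟩ : ∃ a : ℝ, r x = a := ⟨_, (EReal.coe_toReal hx (hbot x)).symm⟩
  obtain ⟨b, hb⟩ : ∃ b : ℝ, r p = b := ⟨_, (EReal.coe_toReal (hp.ne_top hx) (hbot p)).symm⟩
  rw [ha, hb, EReal.toReal_coe, EReal.toReal_coe, ← sub_nonpos]
  refine nonpos_of_forall_le_mul (c := ⟪x - p, T (x - p)⟫ / 2) fun t ht₀ ht₁ => ?_
  have hmin : b + 1 / 2 * ⟪u - p, T (u - p)⟫ ≤ t * a + (1 - t) * b
      + 1 / 2 * ⟪u - (t • x + (1 - t) • p), T (u - (t • x + (1 - t) • p))⟫ := by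
    have h := (hp (t • x + (1 - t) • p)).trans
      (add_le_add_left (le_coe_of_convex hconv ha hb ht₀.le ht₁) _)
    rw [hb] at h
    exact_mod_cast h
  rw [show u - (t • x + (1 - t) • p) = (u - p) - t • (x - p) by module,
    hT.inner_map_sub_smul_self] at hmin
  refine le_of_mul_le_mul_left ?_ ht₀
  linarith

end IsProxPoint

theorem add_smul_le_of_prox_step [CompleteSpace E] {f : E → ℝ} {gradf : E → E}
    (hgrad : ∀ x, HasGradientAt f (gradf x) x) {L : ℝ}
    (hlip : ∀ x y, ‖gradf x - gradf y‖ ≤ L * ‖x - y‖) {x v g : E} {a b Q lm : ℝ}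
    (hstep : b + ⟪g, v⟫ + Q ≤ a) (hlm : 0 < lm) (hv : lm * ‖v‖ ^ 2 ≤ Q)
    {γ ρ α : ℝ} (hγ : 0 < γ) (hρ : 1 < ρ) (hγρ : γ * ρ ≤ 1) (hα : 0 ≤ α)
    (hαL : L * α ≤ 2 * (1 - γ * ρ) * lm) :
    f (x + α • v) + (α * b + (1 - α) * a)
      ≤ f x + a + (-(α * γ) * Q + α / (4 * γ * (ρ - 1) * lm) * ‖gradf x - g‖ ^ 2) := by
  have hc : 0 < γ * (ρ - 1) * lm := by have := sub_pos.2 hρ; positivity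
  have hdesc : f (x + α • v) ≤ f x + α * ⟪gradf x, v⟫ + L / 2 * α ^ 2 * ‖v‖ ^ 2 := by
    have h := le_add_inner_add_sq_of_lipschitz_gradient hgrad hlip x (α • v)
    rwa [real_inner_smul_right, norm_smul, Real.norm_of_nonneg hα, mul_pow, ← mul_assoc] at h
  have hyoung := real_inner_le_sq_div_add_mul_sq hc (gradf x - g) v
  rw [inner_sub_left] at hyoung
  -- The two `‖v‖²` terms are absorbed by `Q` with weights `γ (ρ - 1)` and `1 - γ ρ`, which
  -- leave `-Q + γ (ρ - 1) Q + (1 - γ ρ) Q = -γ Q`.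
  have habsorb : γ * (ρ - 1) * lm * ‖v‖ ^ 2 ≤ γ * (ρ - 1) * Q := by
    rw [mul_assoc]; gcongr
  have hcurv : L / 2 * α * ‖v‖ ^ 2 ≤ (1 - γ * ρ) * Q := calc
    L / 2 * α * ‖v‖ ^ 2 ≤ (1 - γ * ρ) * (lm * ‖v‖ ^ 2) := by
      linarith [mul_le_mul_of_nonneg_right hαL (sq_nonneg ‖v‖)]
    _ ≤ (1 - γ * ρ) * Q := by gcongr
  rw [show α / (4 * γ * (ρ - 1) * lm) * ‖gradf x - g‖ ^ 2
    = α * (‖gradf x - g‖ ^ 2 / (4 * (γ * (ρ - 1) * lm))) by ring]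
  nlinarith [mul_le_mul_of_nonneg_left hstep hα, mul_le_mul_of_nonneg_left hyoung hα,
    mul_le_mul_of_nonneg_left habsorb hα, mul_le_mul_of_nonneg_left hcurv hα]

end

theorem stmt8_general (n : ℕ) (f : EuclideanSpace ℝ (Fin n) → ℝ)
    (gradf : EuclideanSpace ℝ (Fin n) → EuclideanSpace ℝ (Fin n))
    (hgrad : ∀ x, HasGradientAt f (gradf x) x)
    (L : ℝ) (hL : 0 < L)
    (hlip : ∀ x y, ‖gradf x - gradf y‖ ≤ L * ‖x - y‖)
    (r : EuclideanSpace ℝ (Fin n) → EReal)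
    (hconv : ∀ x y : EuclideanSpace ℝ (Fin n), ∀ t : ℝ, 0 ≤ t → t ≤ 1 →
      r (t • x + (1 - t) • y) ≤ (t : EReal) * r x + ((1 - t : ℝ) : EReal) * r y)
    (hproper₂ : ∀ x, r x ≠ ⊥)
    (Λ Λinv : EuclideanSpace ℝ (Fin n) →L[ℝ] EuclideanSpace ℝ (Fin n))
    (hsymm : ∀ u v, ⟪Λ u, v⟫ = ⟪u, Λ v⟫)
    (hΛinv : ∀ u, Λ (Λinv u) = u ∧ Λinv (Λ u) = u)
    (lm : ℝ) (hlm : 0 < lm)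
    (hlow : ∀ u, lm * ‖u‖ ^ 2 ≤ ⟪u, Λ u⟫)
    (prox : EuclideanSpace ℝ (Fin n) → EuclideanSpace ℝ (Fin n))
    (hprox : ∀ x y, r (prox x) + (((1 : ℝ) / 2 * ⟪x - prox x, Λ (x - prox x)⟫ : ℝ) : EReal)
        ≤ r y + (((1 : ℝ) / 2 * ⟪x - y, Λ (x - y)⟫ : ℝ) : EReal))
    (x : EuclideanSpace ℝ (Fin n)) (hx : r x ≠ ⊤)
    (g : EuclideanSpace ℝ (Fin n))
    (γ ρ α : ℝ) (hγ0 : 0 < γ) (hρ1 : 1 < ρ) (hρ2 : ρ < γ⁻¹)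
    (hα0 : 0 ≤ α) (hα1 : α ≤ min 1 (2 * (1 - γ * ρ) * lm / L)) :
    (f (x + α • (prox (x - Λinv g) - x)) : EReal) + r (x + α • (prox (x - Λinv g) - x))
      ≤ (f x : EReal) + r x
        + ((-(α * γ) * ⟪prox (x - Λinv g) - x, Λ (prox (x - Λinv g) - x)⟫
            + α / (4 * γ * (ρ - 1) * lm) * ‖gradf x - g‖ ^ 2 : ℝ) : EReal) := by
  set p := prox (x - Λinv g)
  set v := p - x
  have hp : IsProxPoint r Λ (x - Λinv g) p := hprox _
  have hstep : (r p).toReal + ⟪g, v⟫ + ⟪v, Λ v⟫ ≤ (r x).toReal := by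
    have h := hp.toReal_add_inner_le hsymm hconv hproper₂ hx
    rwa [show x - Λinv g - p = -(Λinv g + v) by module, show x - p = -v by module,
      ContinuousLinearMap.coe_coe, map_neg, map_add, (hΛinv g).1, inner_neg_neg, inner_add_left,
      real_inner_comm v (Λ v), ← add_assoc] at h
  have hγρ : γ * ρ ≤ 1 := by
    have := mul_lt_mul_of_pos_left hρ2 hγ0
    rw [mul_inv_cancel₀ hγ0.ne'] at this
    exact this.le
  have hαL : L * α ≤ 2 * (1 - γ * ρ) * lm := by
    have := (le_div_iff₀ hL).1 (hα1.trans (min_le_right _ _))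
    linarith
  have hr : r (x + α • v) ≤ ((α * (r p).toReal + (1 - α) * (r x).toReal : ℝ) : EReal) := by
    rw [show x + α • v = α • p + (1 - α) • x by module]
    exact le_coe_of_convex hconv (EReal.coe_toReal (hp.ne_top hx) (hproper₂ p)).symm
      (EReal.coe_toReal hx (hproper₂ x)).symm hα0 (hα1.trans (min_le_left _ _))
  rw [← EReal.coe_toReal hx (hproper₂ x), ← EReal.coe_add, ← EReal.coe_add]
  refine (add_le_add_right hr _).trans ?_
  exact_mod_cast add_smul_le_of_prox_step hgrad hlip hstep hlm (hlow v) hγ0 hρ1 hγρ hα0 hαL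

/-- approximate descent of a (stochastic) proximal gradient step:
for `v = prox^Λ_r(x - Λ⁻¹ g) - x` and all `α ∈ [0, min{1, 2(1-γρ)λ_m/L}]`,
`ψ(x + αv) - ψ(x) ≤ -αγ‖v‖_Λ² + α/(4γ(ρ-1)λ_m) ‖∇f(x) - g‖²`. -/
theorem stmt8 (n : ℕ) (f : EuclideanSpace ℝ (Fin n) → ℝ)
    (gradf : EuclideanSpace ℝ (Fin n) → EuclideanSpace ℝ (Fin n))
    (hgrad : ∀ x, HasGradientAt f (gradf x) x)
    (L : ℝ) (hL : 0 < L)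
    (hlip : ∀ x y, ‖gradf x - gradf y‖ ≤ L * ‖x - y‖)
    (r : EuclideanSpace ℝ (Fin n) → EReal)
    (hconv : ∀ x y : EuclideanSpace ℝ (Fin n), ∀ t : ℝ, 0 ≤ t → t ≤ 1 →
      r (t • x + (1 - t) • y) ≤ (t : EReal) * r x + ((1 - t : ℝ) : EReal) * r y)
    (hlsc : LowerSemicontinuous r)
    (hproper₁ : ∃ x, r x ≠ ⊤) (hproper₂ : ∀ x, r x ≠ ⊥)
    (Λ Λinv : EuclideanSpace ℝ (Fin n) →L[ℝ] EuclideanSpace ℝ (Fin n))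
    (hsymm : ∀ u v, ⟪Λ u, v⟫ = ⟪u, Λ v⟫)
    (hΛinv : ∀ u, Λ (Λinv u) = u ∧ Λinv (Λ u) = u)
    (lm : ℝ) (hlm : 0 < lm)
    (hlow : ∀ u, lm * ‖u‖ ^ 2 ≤ ⟪u, Λ u⟫)
    (prox : EuclideanSpace ℝ (Fin n) → EuclideanSpace ℝ (Fin n))
    (hprox : ∀ x y, r (prox x) + (((1 : ℝ) / 2 * ⟪x - prox x, Λ (x - prox x)⟫ : ℝ) : EReal)
        ≤ r y + (((1 : ℝ) / 2 * ⟪x - y, Λ (x - y)⟫ : ℝ) : EReal))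
    (x : EuclideanSpace ℝ (Fin n)) (hx : r x ≠ ⊤)
    (g : EuclideanSpace ℝ (Fin n))
    (γ ρ α : ℝ) (hγ0 : 0 < γ) (hγ1 : γ < 1) (hρ1 : 1 < ρ) (hρ2 : ρ < γ⁻¹)
    (hα0 : 0 ≤ α) (hα1 : α ≤ min 1 (2 * (1 - γ * ρ) * lm / L)) :
    (f (x + α • (prox (x - Λinv g) - x)) : EReal) + r (x + α • (prox (x - Λinv g) - x))
      ≤ (f x : EReal) + r x
        + ((-(α * γ) * ⟪prox (x - Λinv g) - x, Λ (prox (x - Λinv g) - x)⟫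
            + α / (4 * γ * (ρ - 1) * lm) * ‖gradf x - g‖ ^ 2 : ℝ) : EReal) :=
  stmt8_general n f gradf hgrad L hL hlip r hconv hproper₂ Λ Λinv hsymm hΛinv lm hlm hlow prox hprox
    x hx g γ ρ α hγ0 hρ1 hρ2 hα0 hα1
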